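/- arXiv:math/0509009 — 8 statements merged into one kernel-verified Lean document; each statement's English description precedes it below -/
import Mathlib

section
/- Let X be a real random variable and let U be uniformly distributed on [0,1), independent of X. Then the random variable ⌊X + U⌋ - U + 1 has the same distribution as X + U', where U' is uniform on (0,1]. Equivalently, X - {X + U} + 1 is distributed as X + U'. -/
open MeasureTheory ProbabilityTheory

lemma map_sub_restrict_Ico (c a b : ℝ) :
    Measure.map (fun u => c - u) (volume.restrict (Set.Ico a b))
      = volume.restrict (Set.Ioc (c - b) (c - a)) := by
  have hmp : MeasurePreserving (fun u : ℝ => c - u) volume volume :=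
    Measure.measurePreserving_sub_left volume c
  have hpre : (fun u : ℝ => c - u) ⁻¹' Set.Ioc (c - b) (c - a) = Set.Ico a b := by
    ext u
    simp only [Set.mem_preimage, Set.mem_Ioc, Set.mem_Ico]
    constructor
    · rintro ⟨h1, h2⟩; constructor <;> linarith
    · rintro ⟨h1, h2⟩; constructor <;> linarith
  have := Measure.restrict_map (μ := volume) hmp.measurable
    (measurableSet_Ioc (a := c - b) (b := c - a))
  rw [hmp.map_eq] at this
  rw [this, hpre]

lemma map_add_restrict (x a b : ℝ) :
    Measure.map (fun u => x + u) (volume.restrict (Set.Ioc a b))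
      = volume.restrict (Set.Ioc (x + a) (x + b)) := by
  have hmp : MeasurePreserving (fun u : ℝ => x + u) volume volume :=
    measurePreserving_add_left volume x
  have hpre : (fun u : ℝ => x + u) ⁻¹' Set.Ioc (x + a) (x + b) = Set.Ioc a b := by
    ext u
    simp only [Set.mem_preimage, Set.mem_Ioc]
    constructor
    · rintro ⟨h1, h2⟩; constructor <;> linarith
    · rintro ⟨h1, h2⟩; constructor <;> linarith
  have := Measure.restrict_map (μ := volume) hmp.measurable
    (measurableSet_Ioc (a := x + a) (b := x + b))
  rw [hmp.map_eq] at this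
  rw [this, hpre]

lemma floor_map_fixed (x : ℝ) :
    Measure.map (fun u => (⌊x + u⌋ : ℝ) - u + 1) (volume.restrict (Set.Ico (0:ℝ) 1))
      = volume.restrict (Set.Ioc x (x + 1)) := by
  set t : ℝ := (⌊x⌋ : ℝ) + 1 - x with ht
  have ht0 : 0 < t := by
    have := Int.lt_floor_add_one x
    simp only [ht]; linarith
  have ht1 : t ≤ 1 := by
    have := Int.floor_le x
    simp only [ht]; linarith
  have hsplit : volume.restrict (Set.Ico (0:ℝ) 1)
      = volume.restrict (Set.Ico 0 t) + volume.restrict (Set.Ico t 1) := by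
    rw [← Measure.restrict_union _ measurableSet_Ico, Set.Ico_union_Ico_eq_Ico ht0.le ht1]
    exact Set.Ico_disjoint_Ico_same
  have hmeas : Measurable (fun u : ℝ => (⌊x + u⌋ : ℝ) - u + 1) := by
    refine Measurable.add_const ?_ 1
    exact (measurable_from_top.comp (measurable_const.add measurable_id).floor).sub measurable_id
  have h1 : Measure.map (fun u => (⌊x + u⌋ : ℝ) - u + 1) (volume.restrict (Set.Ico 0 t))
      = volume.restrict (Set.Ioc x ((⌊x⌋ : ℝ) + 1)) := by
    have hcongr : Measure.map (fun u => (⌊x + u⌋ : ℝ) - u + 1) (volume.restrict (Set.Ico 0 t))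
        = Measure.map (fun u => ((⌊x⌋ : ℝ) + 1) - u) (volume.restrict (Set.Ico 0 t)) := by
      apply Measure.map_congr
      filter_upwards [ae_restrict_mem measurableSet_Ico] with u hu
      have hu1 : (0:ℝ) ≤ u := hu.1
      have hu2 : u < t := hu.2
      have hfloor : ⌊x + u⌋ = ⌊x⌋ := by
        rw [Int.floor_eq_iff]
        constructor
        · have := Int.floor_le x; linarith
        · push_cast; simp only [ht] at hu2; linarith
      rw [hfloor]; ring
    rw [hcongr, map_sub_restrict_Ico]
    congr 1 <;> simp [ht] <;> ring
  have h2 : Measure.map (fun u => (⌊x + u⌋ : ℝ) - u + 1) (volume.restrict (Set.Ico t 1))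
      = volume.restrict (Set.Ioc ((⌊x⌋ : ℝ) + 1) (x + 1)) := by
    have hcongr : Measure.map (fun u => (⌊x + u⌋ : ℝ) - u + 1) (volume.restrict (Set.Ico t 1))
        = Measure.map (fun u => ((⌊x⌋ : ℝ) + 2) - u) (volume.restrict (Set.Ico t 1)) := by
      apply Measure.map_congr
      filter_upwards [ae_restrict_mem measurableSet_Ico] with u hu
      have hu1 : t ≤ u := hu.1
      have hu2 : u < 1 := hu.2
      have hfloor : ⌊x + u⌋ = ⌊x⌋ + 1 := by
        rw [Int.floor_eq_iff]
        push_cast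
        constructor
        · simp only [ht] at hu1; linarith
        · have := Int.floor_le x; linarith
      rw [hfloor]; push_cast; ring
    rw [hcongr, map_sub_restrict_Ico]
    congr 1 <;> simp [ht] <;> ring
  rw [hsplit, Measure.map_add _ _ hmeas, h1, h2,
    ← Measure.restrict_union _ measurableSet_Ioc,
    Set.Ioc_union_Ioc_eq_Ioc (by have := Int.lt_floor_add_one x; linarith)
      (by have := Int.floor_le x; linarith)]
  exact Set.Ioc_disjoint_Ioc_of_le le_rfl

theorem rounded_uniform_mix {Ω : Type*} [MeasurableSpace Ω] (P : Measure Ω)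
    [IsProbabilityMeasure P] (X U U' : Ω → ℝ)
    (hX : Measurable X) (hU : Measurable U) (hU' : Measurable U')
    (hUdist : Measure.map U P = volume.restrict (Set.Ico (0:ℝ) 1))
    (hU'dist : Measure.map U' P = volume.restrict (Set.Ioc (0:ℝ) 1))
    (hindep : IndepFun X U P) (hindep' : IndepFun X U' P) :
    Measure.map (fun ω => (⌊X ω + U ω⌋ : ℝ) - U ω + 1) P
      = Measure.map (fun ω => X ω + U' ω) P := by
  have hg : Measurable (fun p : ℝ × ℝ => (⌊p.1 + p.2⌋ : ℝ) - p.2 + 1) := by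
    refine Measurable.add_const ?_ 1
    exact (measurable_from_top.comp (measurable_fst.add measurable_snd).floor).sub measurable_snd
  have hadd : Measurable (fun p : ℝ × ℝ => p.1 + p.2) := measurable_fst.add measurable_snd
  have hpair : Measurable (fun ω => (X ω, U ω)) := hX.prodMk hU
  have hpair' : Measurable (fun ω => (X ω, U' ω)) := hX.prodMk hU'
  have hprod : Measure.map (fun ω => (X ω, U ω)) P = (P.map X).prod (P.map U) :=
    (indepFun_iff_map_prod_eq_prod_map_map hX.aemeasurable hU.aemeasurable).mp hindep
  have hprod' : Measure.map (fun ω => (X ω, U' ω)) P = (P.map X).prod (P.map U') :=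
    (indepFun_iff_map_prod_eq_prod_map_map hX.aemeasurable hU'.aemeasurable).mp hindep'
  have hL : Measure.map (fun ω => (⌊X ω + U ω⌋ : ℝ) - U ω + 1) P
      = Measure.map (fun p : ℝ × ℝ => (⌊p.1 + p.2⌋ : ℝ) - p.2 + 1)
        ((P.map X).prod (volume.restrict (Set.Ico (0:ℝ) 1))) := by
    rw [← hUdist, ← hprod, Measure.map_map hg hpair]; rfl
  have hR : Measure.map (fun ω => X ω + U' ω) P
      = Measure.map (fun p : ℝ × ℝ => p.1 + p.2)
        ((P.map X).prod (volume.restrict (Set.Ioc (0:ℝ) 1))) := by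
    rw [← hU'dist, ← hprod', Measure.map_map hadd hpair']; rfl
  rw [hL, hR]
  ext s hs
  rw [Measure.map_apply hg hs, Measure.map_apply hadd hs,
    Measure.prod_apply (hg hs), Measure.prod_apply (hadd hs)]
  refine lintegral_congr fun x => ?_
  have key1 : volume.restrict (Set.Ico (0:ℝ) 1)
      (Prod.mk x ⁻¹' ((fun p : ℝ × ℝ => (⌊p.1 + p.2⌋ : ℝ) - p.2 + 1) ⁻¹' s))
      = volume.restrict (Set.Ioc x (x + 1)) s := by
    have hm : Measurable (fun u : ℝ => (⌊x + u⌋ : ℝ) - u + 1) := by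
      refine Measurable.add_const ?_ 1
      exact (measurable_from_top.comp (measurable_const.add measurable_id).floor).sub measurable_id
    rw [← floor_map_fixed x, Measure.map_apply hm hs]
    rfl
  have key2 : volume.restrict (Set.Ioc (0:ℝ) 1)
      (Prod.mk x ⁻¹' ((fun p : ℝ × ℝ => p.1 + p.2) ⁻¹' s))
      = volume.restrict (Set.Ioc x (x + 1)) s := by
    have hm : Measurable (fun u : ℝ => x + u) := measurable_const.add measurable_id
    have := map_add_restrict x 0 1
    rw [add_zero] at this
    rw [← this, Measure.map_apply hm hs]
    rfl
  rw [key1, key2]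
end

section
/- Let X ~ Uniform(0, N) with N a positive integer, and for 0 ≤ α ≤ 1 let X_α := ⌊X + α⌋ - α + 1. Then Var(X_α) = Var(X) - 1/12 + α(1 - α) = N²/12 - 1/12 + α(1-α). -/
open MeasureTheory ProbabilityTheory
set_option maxHeartbeats 1000000

lemma floorMeas (a : ℝ) : Measurable (fun x : ℝ => ((⌊x + a⌋ : ℤ) : ℝ)) :=
  measurable_from_top.comp ((measurable_id.add_const a).floor)

lemma floor_eq_lower (a : ℝ) (ha0 : 0 ≤ a) (k : ℕ) :
    ∀ x ∈ Set.Ioo (k:ℝ) ((k:ℝ)+1-a), ((⌊x + a⌋ : ℤ) : ℝ) = (k:ℝ) := by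
  intro x hx
  have : ⌊x + a⌋ = (k : ℤ) := by
    rw [Int.floor_eq_iff]
    exact ⟨by push_cast; linarith [hx.1], by push_cast; linarith [hx.2]⟩
  rw [this]; push_cast; ring

lemma floor_eq_upper (a : ℝ) (ha1 : a ≤ 1) (k : ℕ) :
    ∀ x ∈ Set.Ioo ((k:ℝ)+1-a) ((k:ℝ)+1), ((⌊x + a⌋ : ℤ) : ℝ) = (k:ℝ)+1 := by
  intro x hx
  have : ⌊x + a⌋ = (k : ℤ) + 1 := by
    rw [Int.floor_eq_iff]
    exact ⟨by push_cast; linarith [hx.1], by push_cast; linarith [hx.2]⟩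
  rw [this]; push_cast; ring

lemma int_piece (a : ℝ) (ha0 : 0 ≤ a) (ha1 : a ≤ 1) (k : ℕ) (φ : ℝ → ℝ) :
    IntegrableOn (fun x => φ ((⌊x + a⌋ : ℤ) : ℝ)) (Set.Ioc (k:ℝ) ((k:ℝ)+1)) ∧
    ∫ x in Set.Ioc (k:ℝ) ((k:ℝ)+1), φ ((⌊x + a⌋ : ℤ) : ℝ)
      = (1-a) * φ (k:ℝ) + a * φ ((k:ℝ)+1) := by
  have h1 : (k:ℝ) ≤ (k:ℝ)+1-a := by linarith
  have h2 : (k:ℝ)+1-a ≤ (k:ℝ)+1 := by linarith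
  have hu : Set.Ioc (k:ℝ) ((k:ℝ)+1-a) ∪ Set.Ioc ((k:ℝ)+1-a) ((k:ℝ)+1)
      = Set.Ioc (k:ℝ) ((k:ℝ)+1) := Set.Ioc_union_Ioc_eq_Ioc h1 h2
  have hdisj : Disjoint (Set.Ioc (k:ℝ) ((k:ℝ)+1-a)) (Set.Ioc ((k:ℝ)+1-a) ((k:ℝ)+1)) :=
    Set.disjoint_left.2 fun x hx hx' => absurd hx.2 (not_le.2 hx'.1)
  have hIl : IntegrableOn (fun x => φ ((⌊x + a⌋:ℤ):ℝ)) (Set.Ioc (k:ℝ) ((k:ℝ)+1-a)) := by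
    rw [integrableOn_Ioc_iff_integrableOn_Ioo]
    exact (integrableOn_const measure_Ioo_lt_top.ne).congr_fun
      (fun x hx => (congrArg φ (floor_eq_lower a ha0 k x hx)).symm) measurableSet_Ioo
  have hIu : IntegrableOn (fun x => φ ((⌊x + a⌋:ℤ):ℝ)) (Set.Ioc ((k:ℝ)+1-a) ((k:ℝ)+1)) := by
    rw [integrableOn_Ioc_iff_integrableOn_Ioo]
    exact (integrableOn_const measure_Ioo_lt_top.ne).congr_fun
      (fun x hx => (congrArg φ (floor_eq_upper a ha1 k x hx)).symm) measurableSet_Ioo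
  have hJl : ∫ x in Set.Ioc (k:ℝ) ((k:ℝ)+1-a), φ ((⌊x+a⌋:ℤ):ℝ) = (1-a) * φ (k:ℝ) := by
    rw [integral_Ioc_eq_integral_Ioo,
      setIntegral_congr_fun measurableSet_Ioo
        (fun x hx => congrArg φ (floor_eq_lower a ha0 k x hx)),
      setIntegral_const, measureReal_def, Real.volume_Ioo, ENNReal.toReal_ofReal (by linarith), smul_eq_mul]
    ring
  have hJu : ∫ x in Set.Ioc ((k:ℝ)+1-a) ((k:ℝ)+1), φ ((⌊x+a⌋:ℤ):ℝ) = a * φ ((k:ℝ)+1) := by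
    rw [integral_Ioc_eq_integral_Ioo,
      setIntegral_congr_fun measurableSet_Ioo
        (fun x hx => congrArg φ (floor_eq_upper a ha1 k x hx)),
      setIntegral_const, measureReal_def, Real.volume_Ioo, ENNReal.toReal_ofReal (by linarith), smul_eq_mul]
    ring
  refine ⟨by rw [← hu]; exact hIl.union hIu, ?_⟩
  rw [← hu, setIntegral_union hdisj measurableSet_Ioc hIl hIu, hJl, hJu]



lemma int_all (a : ℝ) (ha0 : 0 ≤ a) (ha1 : a ≤ 1) (φ : ℝ → ℝ) (n : ℕ) :
    IntegrableOn (fun x => φ ((⌊x + a⌋:ℤ):ℝ)) (Set.Ioc (0:ℝ) (n:ℝ)) ∧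
    ∫ x in Set.Ioc (0:ℝ) (n:ℝ), φ ((⌊x + a⌋:ℤ):ℝ)
      = ∑ k ∈ Finset.range n, ((1-a) * φ (k:ℝ) + a * φ ((k:ℝ)+1)) := by
  induction n with
  | zero => simp
  | succ n ih =>
    obtain ⟨hI0, hJ0⟩ := ih
    obtain ⟨hIp, hJp⟩ := int_piece a ha0 ha1 n φ
    have hcast : ((n+1:ℕ):ℝ) = (n:ℝ)+1 := by push_cast; ring
    have hu : Set.Ioc (0:ℝ) ((n:ℝ)) ∪ Set.Ioc ((n:ℝ)) ((n:ℝ)+1) = Set.Ioc (0:ℝ) ((n:ℝ)+1) :=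
      Set.Ioc_union_Ioc_eq_Ioc (by positivity) (by linarith)
    have hdisj : Disjoint (Set.Ioc (0:ℝ) ((n:ℝ))) (Set.Ioc ((n:ℝ)) ((n:ℝ)+1)) :=
      Set.disjoint_left.2 fun x hx hx' => absurd hx.2 (not_le.2 hx'.1)
    constructor
    · rw [hcast, ← hu]; exact hI0.union hIp
    · rw [hcast, ← hu, setIntegral_union hdisj measurableSet_Ioc hI0 hIp, hJ0, hJp,
        Finset.sum_range_succ]

lemma sum_id (a : ℝ) (n : ℕ) :
    ∑ k ∈ Finset.range n, ((1-a) * (k:ℝ) + a * ((k:ℝ)+1))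
      = (n:ℝ)*((n:ℝ)-1)/2 + (n:ℝ)*a := by
  induction n with
  | zero => simp
  | succ n ih => rw [Finset.sum_range_succ, ih]; push_cast; ring

lemma sum_sq (a : ℝ) (n : ℕ) :
    ∑ k ∈ Finset.range n, ((1-a) * (k:ℝ)^2 + a * ((k:ℝ)+1)^2)
      = (n:ℝ)*((n:ℝ)-1)*(2*(n:ℝ)-1)/6 + (n:ℝ)^2*a := by
  induction n with
  | zero => simp
  | succ n ih => rw [Finset.sum_range_succ, ih]; push_cast; ring

set_option maxHeartbeats 1000000

theorem variance_rounded_uniform (N : ℕ) (hN : 1 ≤ N) (α : ℝ)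
    (hα0 : 0 ≤ α) (hα1 : α ≤ 1) :
    variance (fun x => (⌊x + α⌋ : ℝ) - α + 1)
        (((N : ENNReal))⁻¹ • volume.restrict (Set.Ioo (0:ℝ) (N:ℝ)))
      = variance (fun x => x)
          (((N : ENNReal))⁻¹ • volume.restrict (Set.Ioo (0:ℝ) (N:ℝ)))
          - 1/12 + α * (1 - α) ∧
    variance (fun x => x)
        (((N : ENNReal))⁻¹ • volume.restrict (Set.Ioo (0:ℝ) (N:ℝ)))
      = (N : ℝ)^2 / 12 := by
  have hNpos : (0:ℝ) < (N:ℝ) := by exact_mod_cast hN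
  have hN0 : (N:ℝ) ≠ 0 := ne_of_gt hNpos
  set μ : Measure ℝ := ((N : ENNReal))⁻¹ • volume.restrict (Set.Ioo (0:ℝ) (N:ℝ)) with hμ
  haveI hprob : IsProbabilityMeasure μ := by
    constructor
    rw [hμ, Measure.smul_apply, Measure.restrict_apply MeasurableSet.univ, Set.univ_inter,
      Real.volume_Ioo, sub_zero, ENNReal.ofReal_natCast, smul_eq_mul,
      ENNReal.inv_mul_cancel (Nat.cast_ne_zero.mpr (by omega)) (ENNReal.natCast_ne_top N)]
  -- key conversion
  have key : ∀ f : ℝ → ℝ, ∫ x, f x ∂μ = (N:ℝ)⁻¹ * ∫ x in Set.Ioc (0:ℝ) (N:ℝ), f x := by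
    intro f
    rw [hμ, integral_smul_measure, ← integral_Ioc_eq_integral_Ioo, smul_eq_mul,
      ENNReal.toReal_inv, ENNReal.toReal_natCast]
  -- integrability and moments of the floor function
  have hIA : IntegrableOn (fun x : ℝ => ((⌊x+α⌋:ℤ):ℝ)) (Set.Ioc (0:ℝ) (N:ℝ)) :=
    (int_all α hα0 hα1 (fun y => y) N).1
  have hIB : IntegrableOn (fun x : ℝ => ((⌊x+α⌋:ℤ):ℝ)^2) (Set.Ioc (0:ℝ) (N:ℝ)) :=
    (int_all α hα0 hα1 (fun y => y^2) N).1
  have EA : ∫ x in Set.Ioc (0:ℝ) (N:ℝ), ((⌊x+α⌋:ℤ):ℝ)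
      = (N:ℝ)*((N:ℝ)-1)/2 + (N:ℝ)*α := by
    have h := (int_all α hα0 hα1 (fun y => y) N).2
    simpa [sum_id] using h
  have EB : ∫ x in Set.Ioc (0:ℝ) (N:ℝ), ((⌊x+α⌋:ℤ):ℝ)^2
      = (N:ℝ)*((N:ℝ)-1)*(2*(N:ℝ)-1)/6 + (N:ℝ)^2*α := by
    have h := (int_all α hα0 hα1 (fun y => y^2) N).2
    simpa [sum_sq] using h
  have hconst : ∀ c : ℝ, IntegrableOn (fun _ : ℝ => c) (Set.Ioc (0:ℝ) (N:ℝ)) :=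
    fun c => integrableOn_const measure_Ioc_lt_top.ne
  -- Memℒp facts
  have hmeasX1 : Measurable (fun x : ℝ => ((⌊x+α⌋:ℤ):ℝ) - α + 1) :=
    ((floorMeas α).sub_const α).add_const 1
  have hbound1 : ∀ᵐ x ∂μ, (fun x : ℝ => ((⌊x+α⌋:ℤ):ℝ) - α + 1) x
      ∈ Set.Icc (-(N:ℝ)-3) ((N:ℝ)+3) := by
    rw [hμ]
    refine Measure.ae_smul_measure ?_ _
    filter_upwards [ae_restrict_mem measurableSet_Ioo] with x hx
    have h1 := Int.floor_le (x+α)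
    have h2 := Int.sub_one_lt_floor (x+α)
    exact Set.mem_Icc.2 ⟨by linarith [hx.1, hx.2], by linarith [hx.1, hx.2]⟩
  have hℒ1 : MemLp (fun x : ℝ => ((⌊x+α⌋:ℤ):ℝ) - α + 1) 2 μ :=
    memLp_of_bounded hbound1 hmeasX1.aestronglyMeasurable 2
  have hboundid : ∀ᵐ x ∂μ, (fun x : ℝ => x) x ∈ Set.Icc (0:ℝ) ((N:ℝ)) := by
    rw [hμ]
    refine Measure.ae_smul_measure ?_ _
    filter_upwards [ae_restrict_mem measurableSet_Ioo] with x hx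
    exact ⟨le_of_lt hx.1, le_of_lt hx.2⟩
  have hℒid : MemLp (fun x : ℝ => x) 2 μ :=
    memLp_of_bounded hboundid measurable_id.aestronglyMeasurable 2
  -- moment computations
  have E1 : ∫ x, (((⌊x+α⌋:ℤ):ℝ) - α + 1) ∂μ
      = (N:ℝ)⁻¹ * (((N:ℝ)*((N:ℝ)-1)/2 + (N:ℝ)*α) + (N:ℝ)*(1-α)) := by
    rw [key]
    congr 1
    rw [setIntegral_congr_fun measurableSet_Ioc
        (fun x _ => show ((⌊x+α⌋:ℤ):ℝ) - α + 1 = ((⌊x+α⌋:ℤ):ℝ) + (1-α) by ring),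
      integral_add hIA (hconst (1-α)), setIntegral_const, measureReal_def, Real.volume_Ioc, sub_zero,
      ENNReal.toReal_ofReal hNpos.le, smul_eq_mul, EA]
  have E2 : ∫ x, (((⌊x+α⌋:ℤ):ℝ) - α + 1)^2 ∂μ
      = (N:ℝ)⁻¹ * (((N:ℝ)*((N:ℝ)-1)*(2*(N:ℝ)-1)/6 + (N:ℝ)^2*α)
          + (2*(1-α)) * ((N:ℝ)*((N:ℝ)-1)/2 + (N:ℝ)*α) + (N:ℝ)*(1-α)^2) := by
    rw [key]
    congr 1
    have hg2 : IntegrableOn (fun x => 2*(1-α)*((⌊x+α⌋:ℤ):ℝ) + (1-α)^2)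
        (Set.Ioc (0:ℝ) (N:ℝ)) := (hIA.const_mul (2*(1-α))).add (hconst ((1-α)^2))
    rw [setIntegral_congr_fun measurableSet_Ioc
        (fun x _ => show (((⌊x+α⌋:ℤ):ℝ) - α + 1)^2
          = ((⌊x+α⌋:ℤ):ℝ)^2 + ((2*(1-α)) * ((⌊x+α⌋:ℤ):ℝ) + (1-α)^2) by ring),
      integral_add hIB hg2,
      integral_add (hIA.const_mul (2*(1-α))) (hconst ((1-α)^2)),
      integral_const_mul, setIntegral_const, measureReal_def, Real.volume_Ioc, sub_zero,
      ENNReal.toReal_ofReal hNpos.le, smul_eq_mul, EA, EB]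
    ring
  have Eid1 : ∫ x, x ∂μ = (N:ℝ)⁻¹ * ((N:ℝ)^2/2) := by
    rw [key]
    congr 1
    rw [← intervalIntegral.integral_of_le hNpos.le, integral_id]
    ring
  have Eid2 : ∫ x, x^2 ∂μ = (N:ℝ)⁻¹ * ((N:ℝ)^3/3) := by
    rw [key]
    congr 1
    rw [← intervalIntegral.integral_of_le hNpos.le, integral_pow]
    norm_num
  have hVid : variance (fun x : ℝ => x) μ = (N:ℝ)^2/12 := by
    rw [variance_eq_sub hℒid]
    simp only [Pi.pow_apply]
    rw [Eid2, Eid1]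
    field_simp
    ring
  refine ⟨?_, hVid⟩
  rw [hVid, variance_eq_sub hℒ1]
  simp only [Pi.pow_apply]
  rw [E2, E1]
  field_simp
  ring
end

section
/- Let X have density h(x) = e^{-x}(e^{-x} - 1 + x)/(1 - e^{-x})² on (0, ∞). Then h is a probability density, i.e., h ≥ 0 on (0,∞) and ∫₀^∞ h(x) dx = 1. -/
open MeasureTheory Real Filter Topology Set

noncomputable def aldousF : ℝ → ℝ := fun x => if x = 0 then -1 else -x / (Real.exp x - 1)

lemma aldous_exp_sub_one_ne {x : ℝ} (hx : x ≠ 0) : Real.exp x - 1 ≠ 0 := by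
  intro h
  have : Real.exp x = Real.exp 0 := by rw [Real.exp_zero]; linarith
  exact hx (Real.exp_injective this)

lemma aldousF_deriv {x : ℝ} (hx : 0 < x) :
    HasDerivAt aldousF (Real.exp (-x) * (Real.exp (-x) - 1 + x) / (1 - Real.exp (-x))^2) x := by
  have hne : Real.exp x - 1 ≠ 0 := aldous_exp_sub_one_ne hx.ne'
  have h1 : HasDerivAt (fun y : ℝ => -y / (Real.exp y - 1))
      (((-1) * (Real.exp x - 1) - (-x) * Real.exp x) / (Real.exp x - 1)^2) x := by
    exact ((hasDerivAt_id x).neg).div ((Real.hasDerivAt_exp x).sub_const 1) hne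
  have heq : ((-1) * (Real.exp x - 1) - (-x) * Real.exp x) / (Real.exp x - 1)^2
      = Real.exp (-x) * (Real.exp (-x) - 1 + x) / (1 - Real.exp (-x))^2 := by
    rw [Real.exp_neg]
    have he : Real.exp x ≠ 0 := Real.exp_ne_zero x
    field_simp
    ring
  rw [← heq]
  apply h1.congr_of_eventuallyEq
  filter_upwards [eventually_ne_nhds hx.ne'] with y hy
  simp [aldousF, hy]

theorem aldous_density_is_density :
    (∀ x ∈ Set.Ioi (0:ℝ),
        0 ≤ Real.exp (-x) * (Real.exp (-x) - 1 + x) / (1 - Real.exp (-x))^2) ∧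
    ∫ x in Set.Ioi (0:ℝ),
        Real.exp (-x) * (Real.exp (-x) - 1 + x) / (1 - Real.exp (-x))^2 = 1 := by
  have key : ∀ x ∈ Set.Ioi (0:ℝ),
      0 ≤ Real.exp (-x) * (Real.exp (-x) - 1 + x) / (1 - Real.exp (-x))^2 := by
    intro x hx
    apply div_nonneg
    · apply mul_nonneg (Real.exp_pos _).le
      nlinarith [Real.add_one_le_exp (-x)]
    · positivity
  refine ⟨key, ?_⟩
  -- continuity at 0 from the right
  have hslope : Tendsto (fun y : ℝ => (Real.exp y - 1) / y) (𝓝[≠] 0) (𝓝 1) := by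
    have := (Real.hasDerivAt_exp 0).1 -- hasDerivAtFilter
    have h := hasDerivAt_iff_tendsto_slope.mp (Real.hasDerivAt_exp 0)
    simpa [slope_fun_def, Real.exp_zero, div_eq_inv_mul] using h
  have hcont : ContinuousWithinAt aldousF (Set.Ici 0) 0 := by
    have hF : Tendsto aldousF (𝓝[≠] (0:ℝ)) (𝓝 (-1)) := by
      have h2 : Tendsto (fun y : ℝ => -((Real.exp y - 1) / y)⁻¹) (𝓝[≠] 0) (𝓝 (-1)) := by
        have := (hslope.inv₀ one_ne_zero).neg
        simpa using this
      apply h2.congr'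
      filter_upwards [self_mem_nhdsWithin] with y hy
      have hy' : (y : ℝ) ≠ 0 := hy
      simp only [aldousF, if_neg hy']
      rw [inv_div]
      field_simp
    have : ContinuousAt aldousF 0 := by
      rw [← continuousWithinAt_compl_self]
      have : aldousF 0 = -1 := by simp [aldousF]
      rw [ContinuousWithinAt, this]
      exact hF
    exact this.continuousWithinAt
  have htop : Tendsto aldousF atTop (𝓝 0) := by
    have h1 : Tendsto (fun x : ℝ => -(x * Real.exp (-x)) * (1 - Real.exp (-x))⁻¹) atTop
        (𝓝 (-(0:ℝ) * (1 - 0)⁻¹)) := by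
      have ha : Tendsto (fun x : ℝ => x * Real.exp (-x)) atTop (𝓝 0) := by
        simpa using Real.tendsto_pow_mul_exp_neg_atTop_nhds_zero 1
      exact ha.neg.mul ((tendsto_const_nhds.sub Real.tendsto_exp_neg_atTop_nhds_zero).inv₀ (by norm_num))
    simp only [neg_zero, zero_mul] at h1
    apply h1.congr'
    filter_upwards [eventually_gt_atTop (0:ℝ)] with x hx
    have hx' : x ≠ 0 := hx.ne'
    have hne : Real.exp x - 1 ≠ 0 := aldous_exp_sub_one_ne hx'
    simp only [aldousF, if_neg hx', Real.exp_neg]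
    have he : Real.exp x ≠ 0 := Real.exp_ne_zero x
    field_simp
  have := integral_Ioi_of_hasDerivAt_of_nonneg hcont (fun x hx => aldousF_deriv hx) key htop
  rw [this]
  simp [aldousF]
end

section
/- Let X have density h(x) = e^{-x}(e^{-x} - 1 + x)/(1 - e^{-x})² on (0, ∞). Then for every real t with t < 1, the moment generating function satisfies E[e^{tX}] = 1 + t·Ψ'(1 - t), where Ψ'(z) = Σ_{k≥0} (z + k)^{-2} is the trigamma function. -/
open MeasureTheory Real Set

private lemma gamma_two : Real.Gamma 2 = 1 := by
  rw [show (2:ℝ) = (1:ℕ) + 1 by norm_num, Real.Gamma_nat_eq_factorial]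
  norm_num

private lemma int_exp {r : ℝ} (hr : 0 < r) :
    ∫ x in Ioi (0:ℝ), Real.exp (-(r * x)) = 1 / r := by
  have h := Real.integral_rpow_mul_exp_neg_mul_Ioi (a := 1) one_pos hr
  simpa [Real.Gamma_one] using h

private lemma int_x_exp {r : ℝ} (hr : 0 < r) :
    ∫ x in Ioi (0:ℝ), x * Real.exp (-(r * x)) = 1 / r ^ 2 := by
  have h := Real.integral_rpow_mul_exp_neg_mul_Ioi (a := 2) two_pos hr
  simp only [show (2:ℝ) - 1 = 1 by norm_num, Real.rpow_one, gamma_two, mul_one] at h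
  rw [h, show ((2:ℝ)) = ((2:ℕ):ℝ) by norm_num, Real.rpow_natCast, div_pow, one_pow]

private lemma integ_exp {r : ℝ} (hr : 0 < r) :
    IntegrableOn (fun x : ℝ => Real.exp (-(r * x))) (Ioi 0) := by
  simpa [neg_mul] using exp_neg_integrableOn_Ioi 0 hr

private lemma integ_x_exp {r : ℝ} (hr : 0 < r) :
    IntegrableOn (fun x : ℝ => x * Real.exp (-(r * x))) (Ioi 0) := by
  have h := integrableOn_rpow_mul_exp_neg_mul_rpow (s := 1) (p := 1) (by norm_num) one_pos hr
  simpa [Real.rpow_one, neg_mul] using h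

private lemma key_eq (a : ℝ) : (fun x : ℝ => Real.exp (-(a * x)) * (Real.exp (-x) - 1 + x))
    = fun x => Real.exp (-((a+1) * x)) - Real.exp (-(a * x)) + x * Real.exp (-(a * x)) := by
  funext x
  have h : Real.exp (-((a+1) * x)) = Real.exp (-(a * x)) * Real.exp (-x) := by
    rw [← Real.exp_add]; ring_nf
  rw [h]; ring

private lemma integ_F {a : ℝ} (ha : 0 < a) :
    IntegrableOn (fun x : ℝ => Real.exp (-(a * x)) * (Real.exp (-x) - 1 + x)) (Ioi 0) := by
  rw [key_eq]
  exact ((integ_exp (by linarith)).sub (integ_exp ha)).add (integ_x_exp ha)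

private lemma int_F {a : ℝ} (ha : 0 < a) :
    ∫ x in Ioi (0:ℝ), Real.exp (-(a * x)) * (Real.exp (-x) - 1 + x)
      = 1/(a+1) - 1/a + 1/a^2 := by
  have ha1 : (0:ℝ) < a + 1 := by linarith
  have h12 : IntegrableOn
      (fun x : ℝ => Real.exp (-((a+1) * x)) - Real.exp (-(a * x))) (Ioi 0) :=
    (integ_exp ha1).sub (integ_exp ha)
  rw [key_eq, integral_add h12 (integ_x_exp ha),
    integral_sub (integ_exp ha1) (integ_exp ha), int_exp ha1, int_exp ha, int_x_exp ha]

private lemma F_nonneg (a x : ℝ) : 0 ≤ Real.exp (-(a * x)) * (Real.exp (-x) - 1 + x) := by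
  have h := Real.add_one_le_exp (-x)
  have := Real.exp_pos (-(a * x))
  nlinarith

private lemma series_eq {t x : ℝ} (hx : 0 < x) :
    HasSum (fun k : ℕ => ((k:ℝ)+1) * (Real.exp (-(((1-t)+(k:ℝ)) * x)) * (Real.exp (-x) - 1 + x)))
      (Real.exp (t * x) *
        (Real.exp (-x) * (Real.exp (-x) - 1 + x) / (1 - Real.exp (-x))^2)) := by
  set r : ℝ := Real.exp (-x) with hr_def
  have hr0 : 0 < r := Real.exp_pos _
  have hr1 : r < 1 := by
    have h := Real.exp_lt_exp.2 (show -x < 0 by linarith)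
    rw [Real.exp_zero] at h
    exact h
  have h1r : (0:ℝ) < 1 - r := by linarith
  have h1 : HasSum (fun k : ℕ => (k:ℝ) * r ^ k) (r / (1-r)^2) :=
    hasSum_coe_mul_geometric_of_norm_lt_one (by rwa [Real.norm_eq_abs, abs_of_pos hr0])
  have h2 : HasSum (fun k : ℕ => r ^ k) (1-r)⁻¹ := hasSum_geometric_of_lt_one hr0.le hr1
  have h3 : HasSum (fun k : ℕ => ((k:ℝ)+1) * r ^ k) (1 / (1-r)^2) := by
    have h4 := h1.add h2
    have hval : r / (1-r)^2 + (1-r)⁻¹ = 1 / (1-r)^2 := by field_simp; ring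
    rw [hval] at h4
    convert h4 using 2 with k
    ring
  have h5 := h3.mul_left (Real.exp (t * x) * (Real.exp (-x) * (Real.exp (-x) - 1 + x)))
  have hval2 : Real.exp (t * x) * (Real.exp (-x) * (Real.exp (-x) - 1 + x)) * (1 / (1-r)^2)
      = Real.exp (t * x) * (Real.exp (-x) * (Real.exp (-x) - 1 + x) / (1 - Real.exp (-x))^2) := by
    rw [hr_def]; ring
  rw [hval2] at h5
  convert h5 using 2 with k
  case e'_3 => rfl
  have hrk : r ^ k = Real.exp ((k:ℝ) * (-x)) := by
    rw [hr_def, ← Real.exp_nat_mul]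
  have he : Real.exp (t * x) * Real.exp (-x) * Real.exp ((k:ℝ) * (-x))
      = Real.exp (-(((1-t)+(k:ℝ)) * x)) := by
    rw [← Real.exp_add, ← Real.exp_add]; congr 1; ring
  rw [hrk, ← he]; ring

theorem aldous_mgf (t : ℝ) (ht : t < 1) :
    ∫ x in Set.Ioi (0:ℝ),
        Real.exp (t * x) *
          (Real.exp (-x) * (Real.exp (-x) - 1 + x) / (1 - Real.exp (-x))^2)
      = 1 + t * ∑' k : ℕ, 1 / ((1 - t) + k)^2 := by
  have h1t : (0:ℝ) < 1 - t := by linarith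
  set a : ℕ → ℝ := fun k => (1 - t) + (k:ℝ) with ha_def
  have ha : ∀ k, 0 < a k := fun k =>
    add_pos_of_pos_of_nonneg h1t (Nat.cast_nonneg k)
  have haS : ∀ k, a (k+1) = a k + 1 := by
    intro k; simp only [ha_def]; push_cast; ring
  set g : ℕ → ℝ := fun k => 1 / a k with hg_def
  -- telescoping sum
  have hgnn : ∀ k, 0 ≤ g k - g (k+1) := by
    intro k
    have hle : a k ≤ a (k+1) := by rw [haS]; linarith
    have h := one_div_le_one_div_of_le (ha k) hle
    simp only [hg_def]
    linarith
  have hg0 : Filter.Tendsto (fun n : ℕ => g n) Filter.atTop (nhds 0) := by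
    have hatop : Filter.Tendsto (fun n : ℕ => a n) Filter.atTop Filter.atTop :=
      Filter.tendsto_atTop_add_const_left _ _ tendsto_natCast_atTop_atTop
    simpa [hg_def, one_div, Pi.inv_def] using hatop.inv_tendsto_atTop
  have htel : HasSum (fun k => g k - g (k+1)) (g 0) := by
    rw [hasSum_iff_tendsto_nat_of_nonneg hgnn]
    have h := Filter.Tendsto.sub (tendsto_const_nhds (x := g 0)) hg0
    rw [sub_zero] at h
    exact Filter.Tendsto.congr (fun n => (Finset.sum_range_sub' g n).symm) h
  have htel_eq : ∀ k, g k - g (k+1) = 1 / (a k * (a k + 1)) := by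
    intro k
    have hA := ha k
    have hA1 : (0:ℝ) < a k + 1 := by linarith
    simp only [hg_def, haS]
    field_simp
    ring
  -- summability of the trigamma series
  have hsq : Summable (fun k : ℕ => 1 / (a k)^2) := by
    set M : ℝ := 1 + 1 / (1-t) with hM_def
    refine Summable.of_nonneg_of_le (fun k => by positivity)
      (fun k => ?_) ((htel.summable).mul_left M)
    have hA := ha k
    have hAge : 1 - t ≤ a k := by
      simp only [ha_def]
      exact le_add_of_nonneg_right (Nat.cast_nonneg k)
    have hMA : a k + 1 ≤ M * a k := by
      have h1 : (1:ℝ) ≤ a k / (1-t) := (one_le_div h1t).2 hAge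
      have h2 : a k + 1 ≤ a k + a k / (1-t) := by linarith
      refine h2.trans_eq ?_
      rw [hM_def]; field_simp
    rw [htel_eq k, mul_one_div, div_le_div_iff₀ (by positivity) (by positivity)]
    nlinarith
  -- the family of integrands
  set f : ℕ → ℝ → ℝ := fun k x =>
    ((k:ℝ)+1) * (Real.exp (-(a k * x)) * (Real.exp (-x) - 1 + x)) with hf_def
  have hfi : ∀ k, Integrable (f k) (volume.restrict (Ioi 0)) := fun k =>
    (integ_F (ha k)).const_mul _
  have hfval : ∀ k : ℕ, ∫ x in Ioi (0:ℝ), f k x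
      = ((k:ℝ)+1) * (1/(a k + 1) - 1/(a k) + 1/(a k)^2) := by
    intro k
    simp only [hf_def]
    rw [integral_const_mul, int_F (ha k)]
  have hfnn : ∀ k x, 0 ≤ f k x := by
    intro k x
    exact mul_nonneg (by positivity) (F_nonneg _ _)
  -- value of each integral, rewritten
  have hck : ∀ k : ℕ, ((k:ℝ)+1) * (1/(a k + 1) - 1/(a k) + 1/(a k)^2)
      = (1-t) * (g k - g (k+1)) + t * (1 / (a k)^2) := by
    intro k
    have hA := ha k
    have hA1 : (0:ℝ) < a k + 1 := by linarith
    have hk1 : (k:ℝ) + 1 = a k + t := by simp only [ha_def]; ring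
    rw [htel_eq k, hk1]
    field_simp
    ring
  have hsumc : Summable (fun k => ∫ x in Ioi (0:ℝ), f k x) := by
    have : (fun k => ∫ x in Ioi (0:ℝ), f k x)
        = fun k => (1-t) * (g k - g (k+1)) + t * (1 / (a k)^2) := by
      funext k; rw [hfval k, hck k]
    rw [this]
    exact ((htel.summable).mul_left (1-t)).add (hsq.mul_left t)
  have hnorm : ∀ k, (fun x => ‖f k x‖) = f k := by
    intro k; funext x; exact Real.norm_of_nonneg (hfnn k x)
  have hsumnorm : Summable (fun k => ∫ x in Ioi (0:ℝ), ‖f k x‖) := by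
    simpa only [hnorm] using hsumc
  -- swap integral and sum
  have hrw : ∫ x in Set.Ioi (0:ℝ),
        Real.exp (t * x) *
          (Real.exp (-x) * (Real.exp (-x) - 1 + x) / (1 - Real.exp (-x))^2)
      = ∫ x in Ioi (0:ℝ), ∑' k, f k x := by
    refine setIntegral_congr_fun measurableSet_Ioi (fun x hx => ?_)
    exact ((series_eq (t := t) hx).tsum_eq).symm
  rw [hrw, ← MeasureTheory.integral_tsum_of_summable_integral_norm hfi hsumnorm]
  -- compute the sum of the integrals
  have : (fun k => ∫ x in Ioi (0:ℝ), f k x)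
      = fun k => (1-t) * (g k - g (k+1)) + t * (1 / (a k)^2) := by
    funext k; rw [hfval k, hck k]
  rw [this, Summable.tsum_add (((htel.summable).mul_left (1-t))) (hsq.mul_left t),
    tsum_mul_left, tsum_mul_left, htel.tsum_eq]
  have hg0val : (1 - t) * g 0 = 1 := by
    simp only [hg_def, ha_def]
    rw [Nat.cast_zero, add_zero, mul_one_div, div_self h1t.ne']
  rw [hg0val]
end

section
/- For real u > 0, ∫₀^∞ m(s) s^{z-1} e^{-s} ds = Σ_{k=1}^∞ (1 - (1 + 2^{-k})^{-z}) Γ(z) for every real z > 0, where m(s) = Σ_{k=1}^∞ (1 - e^{-s/2^k}). -/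
open MeasureTheory Real

lemma aux_integrable (z r : ℝ) (hz : 0 < z) (hr : 0 < r) :
    IntegrableOn (fun s : ℝ => s ^ (z - 1) * Real.exp (-(r * s))) (Set.Ioi 0) := by
  have := integrableOn_rpow_mul_exp_neg_mul_rpow (p := 1) (s := z - 1) (b := r)
    (by linarith) one_pos hr
  simpa [Real.rpow_one] using this

lemma aux_term (z : ℝ) (hz : 0 < z) (k : ℕ) :
    ∫ s in Set.Ioi (0:ℝ), (1 - Real.exp (-s / 2^(k+1))) * s^(z-1) * Real.exp (-s)
      = (1 - (1 + (2:ℝ)⁻¹^(k+1)) ^ (-z)) * Real.Gamma z := by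
  have hc : (0:ℝ) < (2:ℝ)⁻¹^(k+1) := by positivity
  set c : ℝ := (2:ℝ)⁻¹^(k+1) with hcdef
  have h1 : ∫ s in Set.Ioi (0:ℝ), (1 - Real.exp (-s / 2^(k+1))) * s^(z-1) * Real.exp (-s)
      = ∫ s in Set.Ioi (0:ℝ),
          (s ^ (z-1) * Real.exp (-(1 * s)) - s ^ (z-1) * Real.exp (-((1 + c) * s))) := by
    refine setIntegral_congr_fun measurableSet_Ioi (fun s _ => ?_)
    have h2 : -s / 2^(k+1) = -(c * s) := by
      rw [hcdef, inv_pow]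
      field_simp
    rw [h2, sub_mul, sub_mul, one_mul, one_mul]
    have h3 : Real.exp (-(c*s)) * Real.exp (-s) = Real.exp (-((1+c)*s)) := by
      rw [← Real.exp_add]; ring_nf
    calc s ^ (z-1) * Real.exp (-s) - Real.exp (-(c*s)) * s^(z-1) * Real.exp (-s)
        = s ^ (z-1) * Real.exp (-s) - s^(z-1) * (Real.exp (-(c*s)) * Real.exp (-s)) := by ring
      _ = _ := by rw [h3]
  rw [h1, integral_sub (aux_integrable z 1 hz one_pos)
        (aux_integrable z (1 + c) hz (by linarith)),
      integral_rpow_mul_exp_neg_mul_Ioi hz one_pos,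
      integral_rpow_mul_exp_neg_mul_Ioi hz (by linarith : (0:ℝ) < 1 + c)]
  rw [sub_mul, one_mul]
  congr 2
  · norm_num
  · rw [one_div, Real.inv_rpow (by linarith), ← Real.rpow_neg (by linarith)]

theorem mellin_of_m (z : ℝ) (hz : 0 < z) :
    ∫ s in Set.Ioi (0:ℝ),
        (∑' k : ℕ, (1 - Real.exp (-s / 2^(k+1)))) * s^(z-1) * Real.exp (-s)
      = ∑' k : ℕ, (1 - (1 + (2:ℝ)⁻¹^(k+1)) ^ (-z)) * Real.Gamma z := by
  set F : ℕ → ℝ → ℝ := fun k s => (1 - Real.exp (-s / 2^(k+1))) * s^(z-1) * Real.exp (-s)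
    with hF
  have hmeas : ∀ k, AEStronglyMeasurable (F k)
      (volume.restrict (Set.Ioi (0:ℝ))) := by
    intro k
    apply Measurable.aestronglyMeasurable
    fun_prop
  have hnn : ∀ k, ∀ s ∈ Set.Ioi (0:ℝ), 0 ≤ F k s := by
    intro k s hs
    have hs' : (0:ℝ) < s := hs
    have h1 : Real.exp (-s / 2^(k+1)) ≤ 1 := by
      rw [Real.exp_le_one_iff]
      exact div_nonpos_of_nonpos_of_nonneg (by linarith) (by positivity)
    have h2 : (0:ℝ) ≤ s ^ (z-1) := Real.rpow_nonneg hs'.le _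
    have h3 := Real.exp_nonneg (-s)
    simp only [hF]
    have h4 : (0:ℝ) ≤ 1 - Real.exp (-s / 2^(k+1)) := by linarith
    exact mul_nonneg (mul_nonneg h4 h2) h3
  set G : ℕ → ℝ → ℝ := fun k s => (2:ℝ)⁻¹^(k+1) * (s ^ ((z+1) - 1) * Real.exp (-(1 * s)))
    with hG
  have hGint : ∀ k, IntegrableOn (G k) (Set.Ioi 0) := fun k =>
    (aux_integrable (z+1) 1 (by linarith) one_pos).const_mul _
  have hle : ∀ k, ∀ s ∈ Set.Ioi (0:ℝ), F k s ≤ G k s := by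
    intro k s hs
    have hs' : (0:ℝ) < s := hs
    have h1 : 1 - Real.exp (-s / 2^(k+1)) ≤ s / 2^(k+1) := by
      have h := Real.add_one_le_exp (-s / 2^(k+1))
      linarith [neg_div ((2:ℝ)^(k+1)) s]
    have h2 : F k s ≤ (s / 2^(k+1)) * s^(z-1) * Real.exp (-s) := by
      simp only [hF]
      exact mul_le_mul_of_nonneg_right
        (mul_le_mul_of_nonneg_right h1 (Real.rpow_nonneg hs'.le _)) (Real.exp_nonneg _)
    refine h2.trans (le_of_eq ?_)
    have h3 : s ^ ((z+1)-1) = s * s ^ (z - 1) := by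
      rw [show (z+1)-1 = 1 + (z-1) by ring, Real.rpow_add hs', Real.rpow_one]
    simp only [hG, h3, inv_pow, one_mul]
    field_simp
  have hGnn : ∀ k, ∀ s ∈ Set.Ioi (0:ℝ), 0 ≤ G k s := by
    intro k s hs
    have hs' : (0:ℝ) < s := hs
    have h4 : (0:ℝ) ≤ s ^ ((z+1)-1) := Real.rpow_nonneg hs'.le _
    have h5 := Real.exp_nonneg (-(1*s))
    positivity
  set C : ℝ := (1/(1:ℝ)) ^ (z+1) * Real.Gamma (z+1) with hC
  have hCnn : 0 ≤ C := by
    rw [hC]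
    have := Real.Gamma_nonneg_of_nonneg (by linarith : (0:ℝ) ≤ z + 1)
    positivity
  have hGval : ∀ k, ∫ s in Set.Ioi (0:ℝ), G k s = (2:ℝ)⁻¹^(k+1) * C := by
    intro k
    rw [hG, hC]
    simp only
    rw [integral_const_mul, integral_rpow_mul_exp_neg_mul_Ioi (by linarith) one_pos]
  have hbound : ∀ k, ∫⁻ s in Set.Ioi (0:ℝ), ‖F k s‖₊
      ≤ ENNReal.ofReal ((2:ℝ)⁻¹^(k+1) * C) := by
    intro k
    have e1 : ∫⁻ s in Set.Ioi (0:ℝ), ‖F k s‖₊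
        ≤ ∫⁻ s in Set.Ioi (0:ℝ), ENNReal.ofReal (G k s) := by
      refine lintegral_mono_ae ?_
      filter_upwards [ae_restrict_mem measurableSet_Ioi] with s hs
      rw [← enorm_eq_nnnorm, Real.enorm_eq_ofReal (hnn k s hs)]
      exact ENNReal.ofReal_le_ofReal (hle k s hs)
    have e2 : ∫⁻ s in Set.Ioi (0:ℝ), ENNReal.ofReal (G k s)
        = ENNReal.ofReal (∫ s in Set.Ioi (0:ℝ), G k s) := by
      refine (ofReal_integral_eq_lintegral_ofReal (hGint k) ?_).symm
      filter_upwards [ae_restrict_mem measurableSet_Ioi] with s hs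
      exact hGnn k s hs
    rw [hGval k] at e2
    exact e1.trans_eq e2
  have hsum : Summable (fun k : ℕ => (2:ℝ)⁻¹^(k+1) * C) := by
    apply Summable.mul_right
    simp only [pow_succ]
    exact (summable_geometric_of_lt_one (by norm_num) (by norm_num)).mul_right _
  have key : ∫ s in Set.Ioi (0:ℝ), (∑' k, F k s) = ∑' k, ∫ s in Set.Ioi (0:ℝ), F k s := by
    refine integral_tsum hmeas (ne_of_lt (lt_of_le_of_lt (ENNReal.tsum_le_tsum hbound) ?_))
    rw [← ENNReal.ofReal_tsum_of_nonneg (fun k => by positivity) hsum]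
    exact ENNReal.ofReal_lt_top
  have hinteg : ∀ s : ℝ,
      (∑' k : ℕ, (1 - Real.exp (-s / 2^(k+1)))) * s^(z-1) * Real.exp (-s) = ∑' k, F k s := by
    intro s
    rw [mul_assoc, ← tsum_mul_right]
    exact tsum_congr fun k => (mul_assoc _ _ _).symm
  calc ∫ s in Set.Ioi (0:ℝ),
        (∑' k : ℕ, (1 - Real.exp (-s / 2^(k+1)))) * s^(z-1) * Real.exp (-s)
      = ∫ s in Set.Ioi (0:ℝ), (∑' k, F k s) := by
        exact setIntegral_congr_fun measurableSet_Ioi (fun s _ => hinteg s)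
    _ = ∑' k, ∫ s in Set.Ioi (0:ℝ), F k s := key
    _ = ∑' k : ℕ, (1 - (1 + (2:ℝ)⁻¹^(k+1)) ^ (-z)) * Real.Gamma z :=
        tsum_congr fun k => aux_term z hz k
end

section
/- The identity Σ_{j=0}^∞ R_j z^j = Π_{k=1}^∞ (1 - z/2^k) holds for every complex z, where R_j := (-1)^j Π_{k=1}^j (2^k - 1)^{-1} (with R_0 = 1). -/
open Filter Finset Topology


noncomputable def aCoef (j : ℕ) : ℂ := (-1)^j / ∏ k ∈ Finset.range j, ((2:ℂ)^(k+1) - 1)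

lemma prodCast (j : ℕ) : ∏ k ∈ Finset.range j, ((2:ℂ)^(k+1) - 1)
    = ((∏ k ∈ Finset.range j, ((2:ℝ)^(k+1) - 1) : ℝ) : ℂ) := by
  push_cast; rfl

lemma one_le_prodR (j : ℕ) : (1:ℝ) ≤ ∏ k ∈ Finset.range j, ((2:ℝ)^(k+1) - 1) := by
  have h1 : (1:ℝ) = ∏ _k ∈ Finset.range j, 1 := by simp
  rw [h1]
  apply Finset.prod_le_prod (fun k _ => by norm_num)
  intro k _
  have : (2:ℝ) ≤ 2^(k+1) := by
    calc (2:ℝ) = 2^1 := (pow_one 2).symm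
    _ ≤ 2^(k+1) := pow_le_pow_right₀ (by norm_num) (by omega)
  linarith

lemma eulerAux_prod_ne_zero (j : ℕ) : ∏ k ∈ Finset.range j, ((2:ℂ)^(k+1) - 1) ≠ 0 := by
  rw [prodCast]
  intro h
  have h2 := Complex.ofReal_eq_zero.mp h
  nlinarith [one_le_prodR j]

lemma norm_aCoef_le (j : ℕ) : ‖aCoef j‖ ≤ 1 := by
  rw [aCoef, norm_div, norm_pow, norm_neg, norm_one, one_pow, prodCast, Complex.norm_real,
    Real.norm_eq_abs, abs_of_pos (by linarith [one_le_prodR j])]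
  rw [div_le_one (by linarith [one_le_prodR j])]
  exact one_le_prodR j

lemma two_pow_sub_one_ne (j : ℕ) : ((2:ℂ)^(j+1) - 1) ≠ 0 := by
  have : ((2:ℂ)^(j+1) - 1) = (((2:ℝ)^(j+1) - 1 : ℝ) : ℂ) := by push_cast; rfl
  rw [this]
  have : (2:ℝ) ≤ 2^(j+1) := by
    calc (2:ℝ) = 2^1 := (pow_one 2).symm
    _ ≤ 2^(j+1) := pow_le_pow_right₀ (by norm_num) (by omega)
  intro h
  have := Complex.ofReal_eq_zero.mp h
  linarith

lemma aCoef_rec (j : ℕ) : aCoef (j+1) * ((2:ℂ)^(j+1) - 1) = - aCoef j := by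
  rw [aCoef, aCoef, Finset.prod_range_succ]
  field_simp [eulerAux_prod_ne_zero j, two_pow_sub_one_ne j]
  ring


lemma aCoef_succ (j : ℕ) : aCoef (j+1) = - aCoef j / ((2:ℂ)^(j+1) - 1) := by
  rw [eq_div_iff (two_pow_sub_one_ne j)]; exact aCoef_rec j

lemma norm_two_pow_sub_one (j : ℕ) : ‖(2:ℂ)^(j+1) - 1‖ = (2:ℝ)^(j+1) - 1 := by
  have h : ((2:ℂ)^(j+1) - 1) = (((2:ℝ)^(j+1) - 1 : ℝ) : ℂ) := by push_cast; rfl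
  rw [h, Complex.norm_real, Real.norm_eq_abs, abs_of_pos]
  have : (2:ℝ) ≤ 2^(j+1) := by
    calc (2:ℝ) = 2^1 := (pow_one 2).symm
    _ ≤ 2^(j+1) := pow_le_pow_right₀ (by norm_num) (by omega)
  linarith

lemma summable_a (w : ℂ) : Summable (fun j => aCoef j * w^j) := by
  apply summable_of_ratio_norm_eventually_le (r := 1/2) (by norm_num)
  obtain ⟨N, hN⟩ := pow_unbounded_of_one_lt (2 * ‖w‖) (by norm_num : (1:ℝ) < 2)
  filter_upwards [eventually_ge_atTop N] with j hj
  rw [aCoef_succ, pow_succ w j]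
  rw [show - aCoef j / ((2:ℂ)^(j+1) - 1) * (w^j * w) = (aCoef j * w^j) * (-w / ((2:ℂ)^(j+1) - 1)) by ring]
  rw [norm_mul, mul_comm ((1:ℝ)/2)]
  apply mul_le_mul_of_nonneg_left _ (norm_nonneg _)
  rw [norm_div, norm_neg, norm_two_pow_sub_one, div_le_iff₀]
  · have h3 : (1:ℝ) ≤ 2^j := one_le_pow₀ (by norm_num)
    have h1 : (2:ℝ)^N ≤ 2^j := pow_le_pow_right₀ (by norm_num) hj
    have h2 : (2:ℝ)^(j+1) = 2 * 2^j := by ring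
    linarith
  · have : (2:ℝ) ≤ 2^(j+1) := by
      calc (2:ℝ) = 2^1 := (pow_one 2).symm
      _ ≤ 2^(j+1) := pow_le_pow_right₀ (by norm_num) (by omega)
    linarith

noncomputable def gFun (w : ℂ) : ℂ := ∑' j, aCoef j * w^j

lemma step (z : ℂ) : gFun z = (1 - z/2) * gFun (z/2) := by
  have hterm : ∀ j : ℕ, aCoef (j+1) * (z/2)^(j+1) - aCoef (j+1) * z^(j+1)
      = (z/2) * (aCoef j * (z/2)^j) := by
    intro j
    have h2 : ((2:ℂ))^(j+1) ≠ 0 := pow_ne_zero _ two_ne_zero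
    have hz : z^(j+1) = 2^(j+1) * (z/2)^(j+1) := by
      rw [div_pow, mul_comm, div_mul_cancel₀ _ h2]
    rw [hz]
    linear_combination (-((z/2)^(j+1))) * aCoef_rec j
  have hs1 : Summable (fun j => aCoef (j+1) * (z/2)^(j+1)) :=
    (summable_nat_add_iff (f := fun j => aCoef j * (z/2)^j) 1).mpr (summable_a (z/2))
  have hs2 : Summable (fun j => aCoef (j+1) * z^(j+1)) :=
    (summable_nat_add_iff (f := fun j => aCoef j * z^j) 1).mpr (summable_a z)
  have key : gFun (z/2) - gFun z = (z/2) * gFun (z/2) := by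
    rw [gFun, gFun, Summable.tsum_eq_zero_add (summable_a (z/2)), Summable.tsum_eq_zero_add (summable_a z)]
    simp only [pow_zero, mul_one]
    rw [add_sub_add_left_eq_sub, ← Summable.tsum_sub hs1 hs2]
    calc ∑' j, (aCoef (j+1) * (z/2)^(j+1) - aCoef (j+1) * z^(j+1))
        = ∑' j, (z/2) * (aCoef j * (z/2)^j) := tsum_congr hterm
      _ = (z/2) * ∑' j, aCoef j * (z/2)^j := tsum_mul_left
      _ = z / 2 * (aCoef 0 + ∑' (b : ℕ), aCoef (b + 1) * (z / 2) ^ (b + 1)) := by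
          rw [Summable.tsum_eq_zero_add (summable_a (z/2))]; simp
  linear_combination -key

lemma iter (z : ℂ) (n : ℕ) :
    gFun z = (∏ k ∈ Finset.range n, (1 - z/2^(k+1))) * gFun (z / 2^n) := by
  induction n with
  | zero => simp
  | succ n ih =>
    rw [ih, step (z / 2^n), Finset.prod_range_succ]
    have h1 : z / 2^n / 2 = z / 2^(n+1) := by rw [div_div, ← pow_succ]
    rw [h1]; ring


lemma aCoef_zero : aCoef 0 = 1 := by simp [aCoef]

lemma gFun_sub_one (w : ℂ) (hw : ‖w‖ ≤ 1/2) : ‖gFun w - 1‖ ≤ 2 * ‖w‖ := by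
  have h0 : gFun w - 1 = ∑' j, aCoef (j+1) * w^(j+1) := by
    rw [gFun, Summable.tsum_eq_zero_add (summable_a w), aCoef_zero]; simp
  rw [h0]
  have hw1 : ‖w‖ < 1 := lt_of_le_of_lt hw (by norm_num)
  have hgeo : HasSum (fun j : ℕ => ‖w‖^(j+1)) (‖w‖ * (1 - ‖w‖)⁻¹) := by
    have := (hasSum_geometric_of_lt_one (norm_nonneg w) hw1).mul_left ‖w‖
    apply this.congr_fun
    intro j
    rw [pow_succ']
  have hb : ∀ j : ℕ, ‖aCoef (j+1) * w^(j+1)‖ ≤ ‖w‖^(j+1) := by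
    intro j
    rw [norm_mul, norm_pow]
    exact mul_le_of_le_one_left (by positivity) (norm_aCoef_le (j+1))
  calc ‖∑' j, aCoef (j+1) * w^(j+1)‖ ≤ ‖w‖ * (1 - ‖w‖)⁻¹ := tsum_of_norm_bounded hgeo hb
    _ ≤ 2 * ‖w‖ := by
        rw [mul_comm]
        apply mul_le_mul_of_nonneg_right _ (norm_nonneg w)
        rw [inv_le_comm₀ (by linarith) (by norm_num)]
        linarith

lemma norm_zdiv (z : ℂ) (n : ℕ) : ‖z / 2^n‖ = ‖z‖ * (1/2:ℝ)^n := by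
  rw [norm_div, norm_pow]
  simp [div_eq_mul_inv, ← inv_pow]

lemma gtends (z : ℂ) : Tendsto (fun n : ℕ => gFun (z / 2^n)) atTop (𝓝 1) := by
  rw [tendsto_iff_norm_sub_tendsto_zero]
  have T0 : Tendsto (fun n : ℕ => ‖z‖ * (1/2:ℝ)^n) atTop (𝓝 0) := by
    simpa using (tendsto_pow_atTop_nhds_zero_of_lt_one (by norm_num) (by norm_num : (1/2:ℝ) < 1)).const_mul ‖z‖
  refine squeeze_zero' (g := fun n => 2 * (‖z‖ * (1/2:ℝ)^n))
    (Eventually.of_forall fun n => norm_nonneg _) ?_ ?_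
  · filter_upwards [T0.eventually_le_const (by norm_num : (0:ℝ) < 1/2)] with n hn
    have := gFun_sub_one (z / 2^n) (by rwa [norm_zdiv])
    rwa [norm_zdiv] at this
  · simpa using T0.const_mul 2

lemma multipliable_factors (z : ℂ) (hz : ∀ k : ℕ, (1:ℂ) - z/2^(k+1) ≠ 0) :
    Multipliable (fun k : ℕ => (1:ℂ) - z/2^(k+1)) := by
  apply Complex.multipliable_of_summable_log
  have T0 : Tendsto (fun k : ℕ => ‖z‖ * (1/2:ℝ)^(k+1)) atTop (𝓝 0) := by
    have := (tendsto_pow_atTop_nhds_zero_of_lt_one (by norm_num) (by norm_num : (1/2:ℝ) < 1)).const_mul ‖z‖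
    simpa [Function.comp_def] using this.comp (tendsto_add_atTop_nat 1)
  apply Summable.of_norm_bounded_eventually (g := fun k => (3/2) * (‖z‖ * (1/2:ℝ)^(k+1)))
  · apply Summable.mul_left
    apply Summable.mul_left
    exact (summable_geometric_of_lt_one (by norm_num) (by norm_num)).comp_injective (add_left_injective 1)
  · rw [Nat.cofinite_eq_atTop]
    filter_upwards [T0.eventually_le_const (by norm_num : (0:ℝ) < 1/2)] with k hk
    have h1 : ‖-(z/2^(k+1))‖ ≤ 1/2 := by rw [norm_neg, norm_zdiv]; exact hk
    have := Complex.norm_log_one_add_half_le_self h1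
    rw [show (1:ℂ) + -(z/2^(k+1)) = 1 - z/2^(k+1) by ring] at this
    apply this.trans
    rw [norm_neg, norm_zdiv]

theorem euler_identity_half (z : ℂ) :
    ∑' j : ℕ, ((-1)^j / ∏ k ∈ Finset.range j, ((2:ℂ)^(k+1) - 1)) * z^j
      = ∏' k : ℕ, (1 - z / 2^(k+1)) := by
  have hL : (∑' j : ℕ, ((-1)^j / ∏ k ∈ Finset.range j, ((2:ℂ)^(k+1) - 1)) * z^j) = gFun z := rfl
  rw [hL]
  by_cases hz : ∀ k : ℕ, (1:ℂ) - z/2^(k+1) ≠ 0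
  · have hprod := (multipliable_factors z hz).hasProd.tendsto_prod_nat
    have T := hprod.mul (gtends z)
    have T2 : Tendsto (fun n : ℕ => gFun z) atTop
        (𝓝 ((∏' k : ℕ, ((1:ℂ) - z/2^(k+1))) * 1)) := by
      apply T.congr
      intro n
      exact (iter z n).symm
    have := tendsto_nhds_unique T2 tendsto_const_nhds
    rw [← this, mul_one]
  · push_neg at hz
    obtain ⟨m, hm⟩ := hz
    have hg0 : gFun z = 0 := by
      rw [iter z (m+1), Finset.prod_eq_zero (Finset.self_mem_range_succ m) hm, zero_mul]
    have hp0 : HasProd (fun k : ℕ => (1:ℂ) - z/2^(k+1)) 0 := by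
      rw [HasProd]
      apply Tendsto.congr' _ tendsto_const_nhds
      filter_upwards [eventually_ge_atTop ({m} : Finset ℕ)] with s hs
      exact (Finset.prod_eq_zero (hs (Finset.mem_singleton_self m)) hm).symm
    rw [hg0, hp0.tprod_eq]
end

section
/- Let (Y_n) be a monotone sequence of integer-valued random variables (Y_n ≤ Y_{n+1} a.s. for all n), let (a_n) be a real sequence with a_n → ∞ and a_{n+1} - a_n → 0, and let F : ℝ → [0,1] be right-continuous with F(x) → 0 as x → -∞ and F(x) → 1 as x → ∞. Suppose that for every sequence (k_n) of integers, P(Y_n ≤ k_n) = F(k_n - a_n) + o(1) as n → ∞. Then F is monotone nondecreasing, hence a distribution function. -/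
/-!
Since `a n → ∞` with steps tending to `0`, for every `δ > 0` and `x ≤ y` there are arbitrarily
late times `m ≤ n` and integers `k ≤ l` with `l - a m ∈ [y, y + δ)` and `k - a n ∈ [x, x + δ)`.
Monotonicity of `Y` gives `P(Y n ≤ k) ≤ P(Y m ≤ l)`. The hypothesis, which for sequences of
integers `k n` is the same as convergence uniformly in `k`, compares these probabilities with
`F (k - a n)` and `F (l - a m)`, and letting `δ → 0` right continuity gives `F x ≤ F y`.
-/

open MeasureTheory Filter

open Set Topology

theorem tendstoUniformly_of_forall_tendsto_comp {ι β : Type*} [PseudoMetricSpace β]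
    {f : ℕ → ι → β} {b : β} (h : ∀ k : ℕ → ι, Tendsto (fun n => f n (k n)) atTop (𝓝 b)) :
    TendstoUniformly f (fun _ => b) atTop := by
  rw [Metric.tendstoUniformly_iff]
  intro ε hε
  by_contra hbad
  simp only [not_eventually, not_forall, not_lt] at hbad
  obtain ⟨-, i₀, -⟩ := hbad.exists
  -- `i₀` only fills in `k n` at times `n` where no index is far from `b`.
  have hwitness : ∀ n, ∃ i, (∃ i', ε ≤ dist b (f n i')) → ε ≤ dist b (f n i) := by
    intro n
    by_cases hn : ∃ i', ε ≤ dist b (f n i')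
    · obtain ⟨i, hi⟩ := hn
      exact ⟨i, fun _ => hi⟩
    · exact ⟨i₀, fun h' => (hn h').elim⟩
  choose k hk using hwitness
  obtain ⟨n, hfar, hnear⟩ := (hbad.and_eventually
    (Metric.tendsto_nhds.1 (h k) ε hε)).exists
  exact (hk n hfar).not_gt (by rwa [dist_comm])

theorem TendstoUniformly.tendsto_comp_const {ι α J β : Type*} [UniformSpace β]
    {f : ι → α → β} {b : β} {p : Filter ι} {l : Filter J}
    (h : TendstoUniformly f (fun _ => b) p) {n : J → ι} (hn : Tendsto n l p) (k : J → α) :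
    Tendsto (fun j => f (n j) (k j)) l (𝓝 b) :=
  Uniform.tendsto_nhds_right.2 <|
    (tendstoUniformly_iff_tendsto.1 h).comp (hn.prodMk tendsto_top)

theorem ae_monotone_of_ae_le_succ {Ω α : Type*} [MeasurableSpace Ω] [Preorder α]
    {μ : Measure Ω} {Y : ℕ → Ω → α} (h : ∀ n, ∀ᵐ ω ∂μ, Y n ω ≤ Y (n + 1) ω) :
    ∀ᵐ ω ∂μ, Monotone fun n => Y n ω := by
  filter_upwards [ae_all_iff.2 h] with ω hω using monotone_nat_of_le_succ hω

theorem measureReal_setOf_le_le_of_ae_monotone {Ω α : Type*} [MeasurableSpace Ω] [Preorder α]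
    {μ : Measure Ω} [IsFiniteMeasure μ] {Y : ℕ → Ω → α}
    (hY : ∀ᵐ ω ∂μ, Monotone fun n => Y n ω) {m n : ℕ} {k l : α} (hmn : m ≤ n) (hkl : k ≤ l) :
    μ.real {ω | Y n ω ≤ k} ≤ μ.real {ω | Y m ω ≤ l} :=
  ENNReal.toReal_mono (measure_ne_top μ _) <| measure_mono_ae <| by
    filter_upwards [hY] with ω hω hωk using (hω hmn).trans (hωk.trans hkl)

section Crossing

variable {a : ℕ → ℝ}

theorem exists_le_lt_add_of_tendsto_atTop (ha : Tendsto a atTop atTop) {δ : ℝ} {N : ℕ}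
    (hstep : ∀ n ≥ N, a (n + 1) - a n < δ) {c : ℝ} (hc : a N ≤ c) :
    ∃ n ≥ N, a n ≤ c ∧ c < a n + δ := by
  by_contra! hnever
  have hbelow : ∀ n ≥ N, a n ≤ c := by
    intro n hn
    induction n, hn using Nat.le_induction with
    | base => exact hc
    | succ n hn ih => linarith [hnever n hn ih, hstep n hn]
  obtain ⟨n, hn, hcn⟩ := ((eventually_ge_atTop N).and (ha.eventually_gt_atTop c)).exists
  exact (hbelow n hn).not_gt hcn

theorem exists_int_sub_mem_Ico_of_le (ha : Tendsto a atTop atTop)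
    (hstep : Tendsto (fun n => a (n + 1) - a n) atTop (𝓝 0)) {δ : ℝ} (hδ : 0 < δ) (N : ℕ)
    {x y : ℝ} (hxy : x ≤ y) :
    ∃ m n : ℕ, ∃ k l : ℤ, N ≤ m ∧ m ≤ n ∧ k ≤ l ∧
      (l - a m : ℝ) ∈ Ico y (y + δ) ∧ (k - a n : ℝ) ∈ Ico x (x + δ) := by
  obtain ⟨N₀, hN₀⟩ := eventually_atTop.1 (hstep.eventually (gt_mem_nhds hδ))
  have hstep' : ∀ n ≥ max N N₀, a (n + 1) - a n < δ := fun n hn => hN₀ n (le_of_max_le_right hn)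
  set l : ℤ := ⌈a (max N N₀) + y⌉
  obtain ⟨m, hm, hml, hlm⟩ := exists_le_lt_add_of_tendsto_atTop ha hstep' (c := l - y)
    (by linarith [Int.le_ceil (a (max N N₀) + y)])
  set k : ℤ := ⌈a m + x⌉
  obtain ⟨n, hmn, hnk, hkn⟩ := exists_le_lt_add_of_tendsto_atTop ha
    (fun j hj => hstep' j (hm.trans hj)) (c := k - x) (by linarith [Int.le_ceil (a m + x)])
  refine ⟨m, n, k, l, le_of_max_le_left hm, hmn, Int.ceil_le.2 (by linarith), ?_, ?_⟩ <;>
    constructor <;> linarith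

end Crossing

theorem tendsto_nhdsGE_of_mem_Ico_one_div {u : ℕ → ℝ} {z : ℝ}
    (hu : ∀ j : ℕ, u j ∈ Ico z (z + 1 / ((j : ℝ) + 1))) : Tendsto u atTop (𝓝[≥] z) := by
  have hupper : Tendsto (fun j : ℕ => z + 1 / ((j : ℝ) + 1)) atTop (𝓝 z) := by
    simpa using (tendsto_one_div_add_atTop_nhds_zero_nat (𝕜 := ℝ)).const_add z
  refine tendsto_nhdsWithin_iff.2 ⟨?_, Eventually.of_forall fun j => (hu j).1⟩
  exact tendsto_of_tendsto_of_tendsto_of_le_of_le tendsto_const_nhds hupper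
    (fun j : ℕ => (hu j).1) fun j : ℕ => (hu j).2.le

section Shift

variable {G : ℕ → ℤ → ℝ} {F : ℝ → ℝ} {a : ℕ → ℝ}

theorem tendsto_of_tendstoUniformly_sub_shift
    (hG : TendstoUniformly (fun n k => G n k - F (k - a n)) (fun _ => 0) atTop) {z : ℝ}
    (hF : ContinuousWithinAt F (Ici z) z) {J : Type*} {l : Filter J} {p : J → ℕ} {k : J → ℤ}
    (hp : Tendsto p l atTop) (hk : Tendsto (fun j => (k j - a (p j) : ℝ)) l (𝓝[≥] z)) :
    Tendsto (fun j => G (p j) (k j)) l (𝓝 (F z)) := by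
  simpa using (hG.tendsto_comp_const hp k).add (hF.tendsto.comp hk)

theorem monotone_of_tendstoUniformly_sub_shift
    (hG : TendstoUniformly (fun n k => G n k - F (k - a n)) (fun _ => 0) atTop)
    (hGmono : ∀ {m n : ℕ} {k l : ℤ}, m ≤ n → k ≤ l → G n k ≤ G m l)
    (ha : Tendsto a atTop atTop) (hstep : Tendsto (fun n => a (n + 1) - a n) atTop (𝓝 0))
    (hF : ∀ x, ContinuousWithinAt F (Ici x) x) : Monotone F := by
  intro x y hxy
  choose m n k l hm hmn hkl hlm hkn using fun j : ℕ =>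
    exists_int_sub_mem_Ico_of_le ha hstep (δ := 1 / ((j : ℝ) + 1)) Nat.one_div_pos_of_nat j hxy
  have hm' : Tendsto m atTop atTop := tendsto_atTop_mono hm tendsto_id
  have hn' : Tendsto n atTop atTop := tendsto_atTop_mono (fun j => (hm j).trans (hmn j)) tendsto_id
  exact le_of_tendsto_of_tendsto'
    (tendsto_of_tendstoUniformly_sub_shift hG (hF x) hn' (tendsto_nhdsGE_of_mem_Ico_one_div hkn))
    (tendsto_of_tendstoUniformly_sub_shift hG (hF y) hm' (tendsto_nhdsGE_of_mem_Ico_one_div hlm))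
    fun j => hGmono (hmn j) (hkl j)

end Shift

theorem limit_function_is_monotone_general {Ω : Type*} [MeasurableSpace Ω]
    (P : Measure Ω) [IsProbabilityMeasure P] (Y : ℕ → Ω → ℤ)
    (hmono : ∀ n, ∀ᵐ ω ∂P, Y n ω ≤ Y (n+1) ω)
    (a : ℕ → ℝ) (ha : Tendsto a atTop atTop)
    (hstep : Tendsto (fun n => a (n+1) - a n) atTop (nhds 0))
    (F : ℝ → ℝ)
    (hFrc : ∀ x, ContinuousWithinAt F (Set.Ici x) x)
    (hconv : ∀ k : ℕ → ℤ,
      Tendsto (fun n => (P {ω | Y n ω ≤ k n}).toReal - F ((k n : ℝ) - a n))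
        atTop (nhds 0)) :
    Monotone F :=
  monotone_of_tendstoUniformly_sub_shift (G := fun n k => P.real {ω | Y n ω ≤ k})
    (tendstoUniformly_of_forall_tendsto_comp hconv)
    (measureReal_setOf_le_le_of_ae_monotone (ae_monotone_of_ae_le_succ hmono)) ha hstep hFrc

theorem limit_function_is_monotone {Ω : Type*} [MeasurableSpace Ω]
    (P : Measure Ω) [IsProbabilityMeasure P] (Y : ℕ → Ω → ℤ)
    (hmeas : ∀ n, Measurable (Y n))
    (hmono : ∀ n, ∀ᵐ ω ∂P, Y n ω ≤ Y (n+1) ω)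
    (a : ℕ → ℝ) (ha : Tendsto a atTop atTop)
    (hstep : Tendsto (fun n => a (n+1) - a n) atTop (nhds 0))
    (F : ℝ → ℝ) (hF01 : ∀ x, F x ∈ Set.Icc (0:ℝ) 1)
    (hFrc : ∀ x, ContinuousWithinAt F (Set.Ici x) x)
    (hFbot : Tendsto F atBot (nhds 0)) (hFtop : Tendsto F atTop (nhds 1))
    (hconv : ∀ k : ℕ → ℤ,
      Tendsto (fun n => (P {ω | Y n ω ≤ k n}).toReal - F ((k n : ℝ) - a n))
        atTop (nhds 0)) :
    Monotone F :=
  limit_function_is_monotone_general P Y hmono a ha hstep F hFrc hconv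
end

section
/- Let g(0) := Σ_{j=1}^∞ (-1)^{j-1} / (j(2^j - 1)). Then g(0) = Σ_{k=1}^∞ ln(1 + 2^{-k}). -/
open Real

lemma aux_summable_uncurry :
    Summable (Function.uncurry fun (j k : ℕ) =>
      ((-1:ℝ)^j * (2:ℝ)⁻¹^((j+1)*(k+1)) / (j+1))) := by
  have hgeom : Summable (fun n : ℕ => ((2:ℝ)⁻¹)^(n+1)) := by
    apply Summable.comp_injective (summable_geometric_of_lt_one (by norm_num) (by norm_num))
    exact fun a b h => by omega
  have h2 : Summable (fun p : ℕ × ℕ => (2:ℝ)⁻¹^(p.1+1) * (2:ℝ)⁻¹^(p.2+1) * 2) :=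
    (hgeom.mul_of_nonneg hgeom (fun _ => by positivity) (fun _ => by positivity)).mul_right 2
  apply Summable.of_norm_bounded h2
  rintro ⟨j, k⟩
  simp only [Function.uncurry]
  have hn2 : ‖(2:ℝ)⁻¹‖ = (2:ℝ)⁻¹ := by rw [Real.norm_eq_abs]; norm_num
  have hnj : ‖((j:ℝ)+1)‖ = (j:ℝ)+1 := by
    rw [Real.norm_eq_abs, abs_of_nonneg (by positivity)]
  rw [norm_div, norm_mul, norm_pow, norm_pow, norm_neg, norm_one, one_pow, one_mul, hn2, hnj]
  have hle : ((2:ℝ)⁻¹)^((j+1)*(k+1)) ≤ (2:ℝ)⁻¹^(j+1) * (2:ℝ)⁻¹^(k+1) * 2 := by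
    rw [← pow_add]
    have h3 : (2:ℝ)⁻¹^(j+1+(k+1)) * 2 = (2:ℝ)⁻¹^(j+k+1) := by
      rw [show j+1+(k+1) = (j+k+1)+1 by omega, pow_succ]
      ring
    rw [h3]
    apply pow_le_pow_of_le_one (by norm_num) (by norm_num)
    nlinarith [Nat.le_refl j]
  calc ((2:ℝ)⁻¹)^((j+1)*(k+1)) / ((j:ℝ)+1) ≤ ((2:ℝ)⁻¹)^((j+1)*(k+1)) / 1 := by
        apply div_le_div_of_nonneg_left (by positivity) (by norm_num)
        linarith [Nat.cast_nonneg (α := ℝ) j]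
    _ ≤ (2:ℝ)⁻¹^(j+1) * (2:ℝ)⁻¹^(k+1) * 2 := by rw [div_one]; exact hle

theorem g_zero_eq_log_sum :
    ∑' j : ℕ, ((-1:ℝ)^j / ((j+1) * (2^(j+1) - 1)))
      = ∑' k : ℕ, Real.log (1 + (2:ℝ)⁻¹^(k+1)) := by
  have key := aux_summable_uncurry
  -- inner sum over k for fixed j
  have hL : ∀ j : ℕ, HasSum (fun k : ℕ => ((-1:ℝ)^j * (2:ℝ)⁻¹^((j+1)*(k+1)) / (j+1)))
      ((-1:ℝ)^j / ((j+1) * (2^(j+1) - 1))) := by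
    intro j
    set s : ℝ := (2:ℝ)⁻¹^(j+1) with hs
    have hs1 : s < 1 := by
      apply pow_lt_one₀ (by norm_num) (by norm_num); omega
    have hs0 : (0:ℝ) ≤ s := by positivity
    have hg : HasSum (fun k : ℕ => s * s ^ k) (s * (1 - s)⁻¹) :=
      (hasSum_geometric_of_lt_one hs0 hs1).mul_left s
    have h2 : HasSum (fun k : ℕ => ((-1:ℝ)^j / (j+1)) * (s * s ^ k))
        (((-1:ℝ)^j / (j+1)) * (s * (1 - s)⁻¹)) := hg.mul_left _
    have h2j : (0:ℝ) < 2^(j+1) := by positivity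
    have hsval : s = ((2:ℝ)^(j+1))⁻¹ := by rw [hs, inv_pow]
    have h1s : 1 - s = ((2:ℝ)^(j+1) - 1) / 2^(j+1) := by rw [hsval]; field_simp
    have hne : (2:ℝ)^(j+1) - 1 ≠ 0 := by
      have : (1:ℝ) < 2^(j+1) := one_lt_pow₀ (by norm_num) (by omega)
      linarith
    have hval : ((-1:ℝ)^j / (j+1)) * (s * (1 - s)⁻¹)
        = (-1:ℝ)^j / ((j+1) * (2^(j+1) - 1)) := by
      rw [h1s, hsval]
      field_simp
    have hfun : ∀ k : ℕ, (-1:ℝ)^j * (2:ℝ)⁻¹^((j+1)*(k+1)) / (j+1)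
        = ((-1:ℝ)^j / (j+1)) * (s * s ^ k) := by
      intro k
      rw [show (2:ℝ)⁻¹^((j+1)*(k+1)) = s^(k+1) from by rw [hs, ← pow_mul], pow_succ']
      ring
    simp only [hfun]
    rw [← hval]
    exact h2
  -- inner sum over j for fixed k
  have hR : ∀ k : ℕ, HasSum (fun j : ℕ => ((-1:ℝ)^j * (2:ℝ)⁻¹^((j+1)*(k+1)) / (j+1)))
      (Real.log (1 + (2:ℝ)⁻¹^(k+1))) := by
    intro k
    obtain ⟨r, hr⟩ : ∃ r : ℝ, r = (2:ℝ)⁻¹^(k+1) := ⟨_, rfl⟩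
    rw [← hr]
    have hr1 : r < 1 := by
      rw [hr]; apply pow_lt_one₀ (by norm_num) (by norm_num); omega
    have hr0 : (0:ℝ) ≤ r := by rw [hr]; positivity
    have habs : |(-r)| < 1 := by rw [abs_neg, abs_of_nonneg hr0]; exact hr1
    have h := (hasSum_pow_div_log_of_abs_lt_one habs).neg
    have heq : -(-Real.log (1 - -r)) = Real.log (1 + r) := by
      rw [neg_neg, sub_neg_eq_add]
    rw [heq] at h
    have hfun : ∀ j : ℕ, (-1:ℝ)^j * (2:ℝ)⁻¹^((j+1)*(k+1)) / (j+1)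
        = -((-r)^(j+1) / (j+1)) := by
      intro j
      rw [show (2:ℝ)⁻¹^((j+1)*(k+1)) = r^(j+1) from by rw [hr, ← pow_mul, Nat.mul_comm],
        neg_pow, pow_succ]
      ring
    simp only [hfun]
    exact h
  have hLsum : ∀ j : ℕ, (∑' k : ℕ, ((-1:ℝ)^j * (2:ℝ)⁻¹^((j+1)*(k+1)) / (j+1)))
      = (-1:ℝ)^j / ((j+1) * (2^(j+1) - 1)) := fun j => (hL j).tsum_eq
  have hRsum : ∀ k : ℕ, (∑' j : ℕ, ((-1:ℝ)^j * (2:ℝ)⁻¹^((j+1)*(k+1)) / (j+1)))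
      = Real.log (1 + (2:ℝ)⁻¹^(k+1)) := fun k => (hR k).tsum_eq
  calc ∑' j : ℕ, ((-1:ℝ)^j / ((j+1) * (2^(j+1) - 1)))
      = ∑' (j : ℕ) (k : ℕ), ((-1:ℝ)^j * (2:ℝ)⁻¹^((j+1)*(k+1)) / (j+1)) := by
        exact (tsum_congr hLsum).symm
    _ = ∑' (k : ℕ) (j : ℕ), ((-1:ℝ)^j * (2:ℝ)⁻¹^((j+1)*(k+1)) / (j+1)) :=
        (Summable.tsum_comm key).symm
    _ = ∑' k : ℕ, Real.log (1 + (2:ℝ)⁻¹^(k+1)) := tsum_congr hRsum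
end
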